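/- Let G(x,λ) be the 3×3 matrix with rows (1,0,0), (0,1,0), (−λx,0,1), and L(x) the 3×3 matrix with rows (1, x, x²/2), (0,1,x), (0,0,1). Then for any λ, the first column of the product a = G(l_n,λ) L(g_n) ⋯ G(l_1,λ) L(g_1) G(l_0,λ) (with positive reals l_0,…,l_n, g_1,…,g_n) has entry a_{31} a polynomial in λ whose coefficient of (−λ)^1 is l_0 + l_1 + … + l_n and whose coefficient of (−λ)^{n+1} is (∏_{j=1}^{n} g_j²/2) · ∏_{j=0}^{n} l_j. -/
import Mathlib


open Matrix Polynomial

/-- The transition matrix `G(x, λ)` across an interval of length `x`,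
with entries polynomial in `λ`. -/
noncomputable def Gmat (x : ℝ) : Matrix (Fin 3) (Fin 3) (Polynomial ℝ) :=
  !![1, 0, 0; 0, 1, 0; -(Polynomial.C x * Polynomial.X), 0, 1]

/-- The transition matrix `L(x)` across a point mass of size `x`. -/
noncomputable def Lmat (x : ℝ) : Matrix (Fin 3) (Fin 3) (Polynomial ℝ) :=
  !![1, Polynomial.C x, Polynomial.C (x ^ 2 / 2); 0, 1, Polynomial.C x; 0, 0, 1]

/-- The product `a = G(l_n) L(g_n) ⋯ G(l_1) L(g_1) G(l_0)`. -/
noncomputable def dualStringProd (n : ℕ) (l : Fin (n + 1) → ℝ) (g : Fin n → ℝ) :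
    Matrix (Fin 3) (Fin 3) (Polynomial ℝ) :=
  (List.ofFn (fun i : Fin n => (g i, l i.succ))).foldl
    (fun acc p => Gmat p.2 * Lmat p.1 * acc) (Gmat (l 0))

lemma dualStringProd_succ (n : ℕ) (l : Fin (n+2) → ℝ) (g : Fin (n+1) → ℝ) :
    dualStringProd (n+1) l g =
      Gmat (l (Fin.last (n+1))) * Lmat (g (Fin.last n)) *
        dualStringProd n (l ∘ Fin.castSucc) (g ∘ Fin.castSucc) := by
  unfold dualStringProd
  rw [List.ofFn_succ']
  simp only [List.concat_eq_append, List.foldl_append, List.foldl_cons, List.foldl_nil,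
    Fin.succ_last, Function.comp_apply, Fin.succ_castSucc, Fin.castSucc_zero]

lemma entry00 (x y : ℝ) (A : Matrix (Fin 3) (Fin 3) (Polynomial ℝ)) :
    (Gmat x * Lmat y * A) 0 0 = A 0 0 + C y * A 1 0 + C (y^2/2) * A 2 0 := by
  simp [Gmat, Lmat, Matrix.mul_apply, Fin.sum_univ_three]

lemma entry10 (x y : ℝ) (A : Matrix (Fin 3) (Fin 3) (Polynomial ℝ)) :
    (Gmat x * Lmat y * A) 1 0 = A 1 0 + C y * A 2 0 := by
  simp [Gmat, Lmat, Matrix.mul_apply, Fin.sum_univ_three]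

lemma entry20 (x y : ℝ) (A : Matrix (Fin 3) (Fin 3) (Polynomial ℝ)) :
    (Gmat x * Lmat y * A) 2 0 =
      -(C x * X) * (A 0 0 + C y * A 1 0 + C (y^2/2) * A 2 0) + A 2 0 := by
  simp [Gmat, Lmat, Matrix.mul_apply, Fin.sum_univ_three]; ring

lemma coeff_negCXmul (x : ℝ) (p : Polynomial ℝ) (k : ℕ) :
    (-(C x * X) * p).coeff (k+1) = -(x * p.coeff k) := by
  rw [neg_mul, coeff_neg, mul_assoc, coeff_C_mul, coeff_X_mul]

lemma coeff_negCXmul_zero (x : ℝ) (p : Polynomial ℝ) :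
    (-(C x * X) * p).coeff 0 = 0 := by
  rw [neg_mul, coeff_neg, mul_assoc, mul_comm X p, ← mul_assoc, coeff_mul_X_zero, neg_zero]

lemma key (n : ℕ) (l : Fin (n + 1) → ℝ) (g : Fin n → ℝ) :
    (dualStringProd n l g 0 0).coeff 0 = 1 ∧
    (dualStringProd n l g 1 0).coeff 0 = 0 ∧
    (dualStringProd n l g 2 0).coeff 0 = 0 ∧
    (dualStringProd n l g 2 0).coeff 1 = -(∑ i, l i) ∧
    (dualStringProd n l g 0 0).natDegree ≤ n ∧
    (dualStringProd n l g 1 0).natDegree ≤ n ∧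
    (dualStringProd n l g 2 0).natDegree ≤ n + 1 ∧
    (dualStringProd n l g 2 0).coeff (n+1) =
      (-1)^(n+1) * ((∏ j, (g j)^2/2) * ∏ i, l i) := by
  induction n with
  | zero =>
    have h : dualStringProd 0 l g = Gmat (l 0) := by
      unfold dualStringProd; simp
    rw [h]
    have hG0 : Gmat (l 0) 0 0 = 1 := rfl
    have hG1 : Gmat (l 0) 1 0 = 0 := rfl
    have hG2 : Gmat (l 0) 2 0 = -(C (l 0) * X) := rfl
    rw [hG0, hG1, hG2]
    refine ⟨by simp, by simp, by simp, ?_, by simp, by simp, ?_, ?_⟩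
    · simp [Fin.sum_univ_one, coeff_C_mul]
    · exact (natDegree_neg _).le.trans ((natDegree_mul_le).trans (by simp))
    · simp [Fin.sum_univ_one, Fin.prod_univ_one, coeff_C_mul]
  | succ n ih =>
    obtain ⟨h00, h10, h20, h21, d0, d1, d2, htop⟩ :=
      ih (l ∘ Fin.castSucc) (g ∘ Fin.castSucc)
    rw [dualStringProd_succ, entry00, entry10, entry20]
    set A := dualStringProd n (l ∘ Fin.castSucc) (g ∘ Fin.castSucc) with hA
    set y := g (Fin.last n)
    set x := l (Fin.last (n+1))
    -- degree facts needed
    have dB : (A 0 0 + C y * A 1 0 + C (y^2/2) * A 2 0).natDegree ≤ n + 1 := by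
      refine (natDegree_add_le _ _).trans (max_le ((natDegree_add_le _ _).trans (max_le ?_ ?_)) ?_)
      · exact d0.trans (Nat.le_succ n)
      · exact (natDegree_C_mul_le _ _).trans (d1.trans (Nat.le_succ n))
      · exact (natDegree_C_mul_le _ _).trans d2
    have hBtop : (A 0 0 + C y * A 1 0 + C (y^2/2) * A 2 0).coeff (n+1) =
        (y^2/2) * ((-1)^(n+1) * ((∏ j, ((g ∘ Fin.castSucc) j)^2/2) * ∏ i, (l ∘ Fin.castSucc) i)) := by
      rw [coeff_add, coeff_add, coeff_C_mul, coeff_C_mul, htop,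
        coeff_eq_zero_of_natDegree_lt (lt_of_le_of_lt d0 (Nat.lt_succ_self n)),
        coeff_eq_zero_of_natDegree_lt (lt_of_le_of_lt d1 (Nat.lt_succ_self n))]
      ring
    have hB0 : (A 0 0 + C y * A 1 0 + C (y^2/2) * A 2 0).coeff 0 = 1 := by
      rw [coeff_add, coeff_add, coeff_C_mul, coeff_C_mul, h00, h10, h20]; ring
    refine ⟨?_, ?_, ?_, ?_, ?_, ?_, ?_, ?_⟩
    · -- coeff 0 of new 00 entry
      exact hB0
    · rw [coeff_add, coeff_C_mul, h10, h20]; ring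
    · rw [coeff_add, coeff_negCXmul_zero, h20, add_zero]
    · rw [coeff_add, coeff_negCXmul, hB0, h21, Fin.sum_univ_castSucc (f := l)]
      simp only [Function.comp_apply]
      ring
    · exact dB
    · refine (natDegree_add_le _ _).trans (max_le (d1.trans (Nat.le_succ n))
        ((natDegree_C_mul_le _ _).trans d2))
    · refine (natDegree_add_le _ _).trans (max_le ?_ (d2.trans (Nat.le_succ (n+1))))
      refine (natDegree_mul_le).trans ?_
      have h1 : (-(C x * X)).natDegree ≤ 1 :=
        (natDegree_neg _).le.trans ((natDegree_mul_le).trans (by simp))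
      exact le_trans (add_le_add h1 dB) (by omega)
    · rw [coeff_add, coeff_negCXmul, hBtop,
        coeff_eq_zero_of_natDegree_lt (lt_of_le_of_lt d2 (Nat.lt_succ_self (n+1))), add_zero,
        Fin.prod_univ_castSucc (f := fun i => l i), Fin.prod_univ_castSucc (f := fun j => (g j)^2/2)]
      simp only [Function.comp_apply]
      ring

/-- The `(3,1)` entry of `a = G(l_n,λ) L(g_n) ⋯ G(l_1,λ) L(g_1) G(l_0,λ)` is a polynomial
in `λ` whose coefficient of `(-λ)^1` is `l_0 + … + l_n` and whose coefficient of
`(-λ)^{n+1}` is `(∏ g_j²/2) ∏ l_j`. -/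
theorem dualStringProd_entry31_coeffs (n : ℕ) (l : Fin (n + 1) → ℝ) (g : Fin n → ℝ)
    (hl : ∀ i, 0 < l i) (hg : ∀ j, 0 < g j) :
    ((dualStringProd n l g) 2 0).coeff 1 = (-1) ^ 1 * (∑ i, l i) ∧
    ((dualStringProd n l g) 2 0).coeff (n + 1) =
      (-1) ^ (n + 1) * ((∏ j : Fin n, (g j) ^ 2 / 2) * ∏ i, l i) := by
  obtain ⟨-, -, -, h1, -, -, -, h2⟩ := key n l g
  exact ⟨by rw [h1]; ring, h2⟩
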